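/- (Theorem 1, differentiability almost everywhere.) Take Θ = ℝ^p. If the local Lipschitz assumption holds at every θ ∈ ℝ^p (with neighborhood U_θ and integrable L_θ possibly depending on θ), then the function D(θ) = sup_{φ∈Φ, η∈Π} CFD²_{ω_η}((f_φ)_*P, (z ↦ f_φ(g(θ,z)))_*ζ) is differentiable at Lebesgue-almost every θ ∈ ℝ^p. -/

import Mathlib

open MeasureTheory Filter Topology
open scoped NNReal

/-- Characteristic function of a measure on Euclidean space. -/
noncomputable def charFn {m : ℕ} (μ : Measure (EuclideanSpace ℝ (Fin m)))
    (t : EuclideanSpace ℝ (Fin m)) : ℂ :=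
  ∫ x, Complex.exp (Complex.I * ((inner ℝ t x : ℝ) : ℂ)) ∂μ

/-- Squared characteristic function distance between `μ` and `ν` with weighting measure `ω`. -/
noncomputable def CFD2 {m : ℕ} (ω μ ν : Measure (EuclideanSpace ℝ (Fin m))) : ℝ :=
  ∫ t, ‖charFn μ t - charFn ν t‖ ^ 2 ∂ω

open Metric
open scoped ENNReal

private lemma stepanov_aux {p : ℕ} {f : EuclideanSpace ℝ (Fin p) → ℝ}
    {S : Set (EuclideanSpace ℝ (Fin p))} {C δ : ℝ} (hC : 0 ≤ C) (hδ : 0 < δ)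
    (hS : ∀ z ∈ S, ∀ y, dist y z < δ → |f y - f z| ≤ C * dist y z)
    {x : EuclideanSpace ℝ (Fin p)} (hx : x ∈ S)
    (hd : DifferentiableWithinAt ℝ f S x)
    (hdens : Tendsto
      (fun r => volume (S ∩ Metric.closedBall x r) / volume (Metric.closedBall x r))
      (𝓝[>] (0:ℝ)) (𝓝 1)) :
    DifferentiableAt ℝ f x := by
  obtain ⟨L, hL⟩ := hd
  refine ⟨L, hasFDerivAt_iff_isLittleO.2 ?_⟩
  rw [Asymptotics.isLittleO_iff]
  intro ε hε
  have hden : (0:ℝ) < C + ‖L‖ + 2 := by positivity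
  set ε' : ℝ := min 1 (ε / (C + ‖L‖ + 2)) with hε'def
  have hε'pos : 0 < ε' := lt_min one_pos (div_pos hε hden)
  have hε'le1 : ε' ≤ 1 := min_le_left _ _
  have hε'le : ε' * (C + ‖L‖ + 2) ≤ ε := by
    have h1 : ε' ≤ ε / (C + ‖L‖ + 2) := min_le_right _ _
    calc ε' * (C + ‖L‖ + 2) ≤ (ε / (C + ‖L‖ + 2)) * (C + ‖L‖ + 2) := by
          exact mul_le_mul_of_nonneg_right h1 hden.le
      _ = ε := div_mul_cancel₀ _ hden.ne'
  have h1ε' : (0:ℝ) < 1 + ε' := by linarith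
  -- within-differentiability quantitatively
  have h1' : ∀ᶠ z in 𝓝[S] x, ‖f z - f x - L (z - x)‖ ≤ ε' * ‖z - x‖ :=
    (Asymptotics.isLittleO_iff.1 (hasFDerivWithinAt_iff_isLittleO.1 hL)) hε'pos
  obtain ⟨δ₁, hδ₁pos, hδ₁⟩ : ∃ δ₁ > 0, ∀ z ∈ S, dist z x < δ₁ →
      ‖f z - f x - L (z - x)‖ ≤ ε' * ‖z - x‖ := by
    obtain ⟨δ₁, hδ₁pos, hsub⟩ := Metric.mem_nhdsWithin_iff.1 h1'
    exact ⟨δ₁, hδ₁pos, fun z hzS hzx => hsub ⟨Metric.mem_ball.2 hzx, hzS⟩⟩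
  -- density quantitatively
  set a : ℝ := (ε' / (1 + ε')) ^ p with ha_def
  have hapos : 0 < a := by positivity
  have hale1 : a ≤ 1 := by
    apply pow_le_one₀ (by positivity)
    rw [div_le_one h1ε']; linarith
  set c₀ : ℝ≥0∞ := 1 - ENNReal.ofReal a with hc₀def
  have hc₀ : c₀ < 1 := by
    apply ENNReal.sub_lt_self ENNReal.one_ne_top one_ne_zero
    simp [ENNReal.ofReal_pos, hapos]
  have h2 : ∀ᶠ r in 𝓝[>] (0:ℝ),
      c₀ < volume (S ∩ Metric.closedBall x r) / volume (Metric.closedBall x r) :=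
    hdens.eventually (eventually_gt_nhds hc₀)
  obtain ⟨r₀, hr₀pos, hr₀⟩ : ∃ r₀ > 0, ∀ r ∈ Set.Ioc (0:ℝ) r₀,
      c₀ < volume (S ∩ Metric.closedBall x r) / volume (Metric.closedBall x r) := by
    obtain ⟨u, hu, hsub⟩ := mem_nhdsGT_iff_exists_Ioc_subset.1 h2
    exact ⟨u, hu, fun r hr => hsub hr⟩
  set ρ : ℝ := min δ (min (r₀ / (1 + ε')) (δ₁ / (1 + ε'))) with hρdef
  have hρpos : 0 < ρ := lt_min hδ (lt_min (by positivity) (by positivity))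
  filter_upwards [Metric.ball_mem_nhds x hρpos] with y hy
  rcases eq_or_ne y x with rfl | hyx
  · simp
  have hspos : 0 < dist y x := dist_pos.2 hyx
  set s : ℝ := dist y x with hsdef
  have hsρ : s < ρ := Metric.mem_ball.1 hy
  have hsδ : s < δ := lt_of_lt_of_le hsρ (min_le_left _ _)
  have hsr₀ : s < r₀ / (1 + ε') :=
    lt_of_lt_of_le hsρ (le_trans (min_le_right _ _) (min_le_left _ _))
  have hsδ₁ : s < δ₁ / (1 + ε') :=
    lt_of_lt_of_le hsρ (le_trans (min_le_right _ _) (min_le_right _ _))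
  -- find a point of S close to y
  have hz : ∃ z ∈ S, dist z y ≤ ε' * s := by
    by_contra hcon
    push_neg at hcon
    set r : ℝ := (1 + ε') * s with hrdef
    have hrpos : 0 < r := by positivity
    have hrr₀ : r ≤ r₀ := by
      have := (lt_div_iff₀ h1ε').1 hsr₀
      calc r = s * (1 + ε') := by ring
        _ ≤ r₀ := this.le
    have hratio := hr₀ r ⟨hrpos, hrr₀⟩
    have hsub1 : Metric.closedBall y (ε' * s) ⊆ Metric.closedBall x r := by
      intro w hw
      rw [Metric.mem_closedBall] at hw ⊢
      calc dist w x ≤ dist w y + dist y x := dist_triangle _ _ _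
        _ ≤ ε' * s + s := add_le_add hw le_rfl
        _ = r := by rw [hrdef]; ring
    have hsub2 : S ∩ Metric.closedBall x r ⊆
        Metric.closedBall x r \ Metric.closedBall y (ε' * s) := by
      rintro w ⟨hwS, hwB⟩
      refine ⟨hwB, fun hwB2 => ?_⟩
      exact absurd (Metric.mem_closedBall.1 hwB2) (not_le.2 (hcon w hwS))
    set κ : ℝ≥0∞ := volume (Metric.ball (0 : EuclideanSpace ℝ (Fin p)) 1) with hκdef
    have hfr : Module.finrank ℝ (EuclideanSpace ℝ (Fin p)) = p := finrank_euclideanSpace_fin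
    have hvol1 : volume (Metric.closedBall y (ε' * s)) = ENNReal.ofReal ((ε' * s) ^ p) * κ := by
      rw [Measure.addHaar_closedBall volume y (by positivity), hfr]
    have hV : volume (Metric.closedBall x r) = ENNReal.ofReal (r ^ p) * κ := by
      rw [Measure.addHaar_closedBall volume x hrpos.le, hfr]
    have hVne0 : volume (Metric.closedBall x r) ≠ 0 :=
      (measure_closedBall_pos _ _ hrpos).ne'
    have hVfin : volume (Metric.closedBall x r) ≠ ⊤ := measure_closedBall_lt_top.ne
    have hlt : c₀ * volume (Metric.closedBall x r) < volume (S ∩ Metric.closedBall x r) :=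
      (ENNReal.lt_div_iff_mul_lt (Or.inl hVne0) (Or.inl hVfin)).1 hratio
    have hle : volume (S ∩ Metric.closedBall x r) ≤
        volume (Metric.closedBall x r) - volume (Metric.closedBall y (ε' * s)) := by
      calc volume (S ∩ Metric.closedBall x r)
          ≤ volume (Metric.closedBall x r \ Metric.closedBall y (ε' * s)) :=
            measure_mono hsub2
        _ = volume (Metric.closedBall x r) - volume (Metric.closedBall y (ε' * s)) :=
            measure_diff hsub1 measurableSet_closedBall.nullMeasurableSet
              measure_closedBall_lt_top.ne
    have hkey : volume (Metric.closedBall x r) - volume (Metric.closedBall y (ε' * s)) =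
        c₀ * volume (Metric.closedBall x r) := by
      rw [hV, hvol1, hc₀def]
      rw [ENNReal.sub_mul (fun _ _ => ENNReal.mul_ne_top ENNReal.ofReal_ne_top
        measure_ball_lt_top.ne), one_mul]
      congr 1
      rw [← mul_assoc, ← ENNReal.ofReal_mul (le_of_lt hapos)]
      congr 2
      rw [ha_def, ← mul_pow]
      congr 1
      field_simp
      ring
    exact absurd hlt (not_lt.2 (le_of_le_of_eq hle hkey)).elim
  obtain ⟨z, hzS, hzy⟩ := hz
  have hzx : dist z x ≤ (1 + ε') * s := by
    calc dist z x ≤ dist z y + dist y x := dist_triangle _ _ _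
      _ ≤ ε' * s + s := add_le_add hzy le_rfl
      _ = (1 + ε') * s := by ring
  have hzδ₁ : dist z x < δ₁ := by
    apply lt_of_le_of_lt hzx
    calc (1 + ε') * s < (1 + ε') * (δ₁ / (1 + ε')) := by
          exact mul_lt_mul_of_pos_left hsδ₁ h1ε'
      _ = δ₁ := mul_div_cancel₀ _ h1ε'.ne'
  have hyz : dist y z < δ := by
    calc dist y z = dist z y := dist_comm _ _
      _ ≤ ε' * s := hzy
      _ ≤ 1 * s := mul_le_mul_of_nonneg_right hε'le1 hspos.le
      _ = s := one_mul s
      _ < δ := hsδ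
  have e1 : |f y - f z| ≤ C * dist y z := hS z hzS y hyz
  have e2 : ‖f z - f x - L (z - x)‖ ≤ ε' * ‖z - x‖ := hδ₁ z hzS hzδ₁
  have hiden : f y - f x - L (y - x) =
      (f y - f z) + (f z - f x - L (z - x)) + L (z - y) := by
    have : L (z - x) + L (z - y) = L (z - x + (z - y)) := (map_add L _ _).symm
    have h2 : L (y - x) = L (z - x) - L (z - y) := by
      rw [← map_sub]
      congr 1
      abel
    rw [h2]; ring
  rw [hiden]
  have hnzx : ‖z - x‖ ≤ (1 + ε') * s := by rw [← dist_eq_norm]; exact hzx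
  have hnzy : ‖z - y‖ ≤ ε' * s := by rw [← dist_eq_norm]; exact hzy
  calc ‖(f y - f z) + (f z - f x - L (z - x)) + L (z - y)‖
      ≤ ‖f y - f z‖ + ‖f z - f x - L (z - x)‖ + ‖L (z - y)‖ := norm_add₃_le
    _ ≤ C * dist y z + ε' * ‖z - x‖ + ‖L‖ * ‖z - y‖ := by
        refine add_le_add (add_le_add ?_ e2) (L.le_opNorm _)
        rw [Real.norm_eq_abs]; exact e1
    _ ≤ C * (ε' * s) + ε' * ((1 + ε') * s) + ‖L‖ * (ε' * s) := by
        refine add_le_add (add_le_add ?_ ?_) ?_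
        · exact mul_le_mul_of_nonneg_left (by rw [dist_comm]; exact hzy) hC
        · exact mul_le_mul_of_nonneg_left hnzx hε'pos.le
        · exact mul_le_mul_of_nonneg_left hnzy L.opNorm_nonneg
    _ = ε' * (C + (1 + ε') + ‖L‖) * s := by ring
    _ ≤ ε' * (C + ‖L‖ + 2) * s := by
        have : C + (1 + ε') + ‖L‖ ≤ C + ‖L‖ + 2 := by linarith
        exact mul_le_mul_of_nonneg_right (mul_le_mul_of_nonneg_left this hε'pos.le) hspos.le
    _ ≤ ε * s := mul_le_mul_of_nonneg_right hε'le hspos.le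
    _ = ε * ‖y - x‖ := by rw [hsdef, dist_eq_norm]
private lemma stepanov {p : ℕ} {f : EuclideanSpace ℝ (Fin p) → ℝ}
    (h : ∀ x, ∃ K : ℝ, ∃ ε > 0, ∀ y, dist y x < ε → |f y - f x| ≤ K * dist y x) :
    ∀ᵐ x ∂(volume : Measure (EuclideanSpace ℝ (Fin p))), DifferentiableAt ℝ f x := by
  have hcont : Continuous f := by
    rw [continuous_iff_continuousAt]
    intro x
    obtain ⟨K, ε, hεpos, hK⟩ := h x
    rw [ContinuousAt, tendsto_iff_dist_tendsto_zero]
    have hb : ∀ᶠ y in 𝓝 x, dist (f y) (f x) ≤ K * dist y x := by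
      filter_upwards [Metric.ball_mem_nhds x hεpos] with y hy
      rw [Real.dist_eq]
      exact hK y (Metric.mem_ball.1 hy)
    have hto : Tendsto (fun y => K * dist y x) (𝓝 x) (𝓝 0) := by
      have h1 : Tendsto (fun y => dist y x) (𝓝 x) (𝓝 (dist x x)) :=
        (continuous_id.dist continuous_const).tendsto x
      rw [dist_self] at h1
      simpa using h1.const_mul K
    exact squeeze_zero' (Eventually.of_forall fun y => dist_nonneg) hb hto
  set A : ℕ → Set (EuclideanSpace ℝ (Fin p)) := fun n =>
    {x | ∀ y, dist y x < 1 / (n + 1 : ℝ) → |f y - f x| ≤ (n + 1 : ℝ) * dist y x} with hAdef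
  have hAclosed : ∀ n, IsClosed (A n) := by
    intro n
    have heq : A n = ⋂ y, {x | dist y x < 1 / (n + 1 : ℝ) ∧
        (n + 1 : ℝ) * dist y x < |f y - f x|}ᶜ := by
      ext x
      simp only [hAdef, Set.mem_setOf_eq, Set.mem_iInter, Set.mem_compl_iff, not_and, not_lt]
    rw [heq]
    refine isClosed_iInter fun y => IsOpen.isClosed_compl ?_
    exact (isOpen_lt (continuous_const.dist continuous_id) continuous_const).and
      (isOpen_lt (continuous_const.mul (continuous_const.dist continuous_id))
        ((continuous_const.sub hcont).abs))
  obtain ⟨Dset, hDcount, hDdense⟩ :=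
    TopologicalSpace.exists_countable_dense (EuclideanSpace ℝ (Fin p))
  obtain ⟨cseq, hcseq⟩ := hDcount.exists_eq_range hDdense.nonempty
  set S : ℕ → ℕ → Set (EuclideanSpace ℝ (Fin p)) := fun n k =>
    A n ∩ Metric.closedBall (cseq k) (1 / (4 * (n + 1 : ℝ))) with hSdef
  have hSmeas : ∀ n k, MeasurableSet (S n k) := fun n k =>
    ((hAclosed n).inter Metric.isClosed_closedBall).measurableSet
  have hSlip : ∀ (n k : ℕ), LipschitzOnWith ((n : ℝ≥0) + 1) f (S n k) := by
    intro n k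
    rw [lipschitzOnWith_iff_dist_le_mul]
    intro u hu v hv
    have hnpos : (0:ℝ) < (n + 1 : ℝ) := by positivity
    have hd : dist u v < 1 / (n + 1 : ℝ) := by
      calc dist u v ≤ dist u (cseq k) + dist (cseq k) v := dist_triangle _ _ _
        _ ≤ 1 / (4 * (n + 1 : ℝ)) + 1 / (4 * (n + 1 : ℝ)) := by
            refine add_le_add (Metric.mem_closedBall.1 hu.2) ?_
            rw [dist_comm]
            exact Metric.mem_closedBall.1 hv.2
        _ = 1 / (2 * (n + 1 : ℝ)) := by field_simp; ring
        _ < 1 / (n + 1 : ℝ) := by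
            apply one_div_lt_one_div_of_lt hnpos
            linarith
    have hv1 := hv.1 u hd
    rw [Real.dist_eq]
    have hcoe : (((n : ℝ≥0) + 1 : ℝ≥0) : ℝ) = (n + 1 : ℝ) := by push_cast; ring
    rw [hcoe]
    exact hv1
  have hae1 : ∀ n k, ∀ᵐ x ∂(volume : Measure (EuclideanSpace ℝ (Fin p))),
      x ∈ S n k → DifferentiableWithinAt ℝ f (S n k) x := fun n k =>
    (hSlip n k).ae_differentiableWithinAt_of_mem
  have hae2 : ∀ n k, ∀ᵐ x ∂(volume : Measure (EuclideanSpace ℝ (Fin p))),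
      x ∈ S n k → Tendsto (fun r => volume (S n k ∩ Metric.closedBall x r) /
        volume (Metric.closedBall x r)) (𝓝[>] (0:ℝ)) (𝓝 1) := by
    intro n k
    filter_upwards [Besicovitch.ae_tendsto_measure_inter_div_of_measurableSet volume
      (hSmeas n k)] with x hx hxS
    simpa [Set.indicator_of_mem hxS] using hx
  filter_upwards [ae_all_iff.2 fun n => ae_all_iff.2 fun k => hae1 n k,
    ae_all_iff.2 fun n => ae_all_iff.2 fun k => hae2 n k] with x H1 H2
  obtain ⟨K, ε, hεpos, hK⟩ := h x
  obtain ⟨N1, hN1⟩ := exists_nat_gt K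
  obtain ⟨N2, hN2⟩ := exists_nat_gt (1 / ε)
  set n : ℕ := N1 + N2 with hndef
  have hnpos : (0:ℝ) < (n + 1 : ℝ) := by positivity
  have hNn1 : K ≤ (n + 1 : ℝ) := by
    have : (N1 : ℝ) ≤ (n : ℝ) := by
      rw [hndef]; push_cast; linarith [Nat.cast_nonneg (α := ℝ) N2]
    linarith
  have hNn2 : 1 / (n + 1 : ℝ) < ε := by
    have h2 : (N2 : ℝ) ≤ (n : ℝ) := by
      rw [hndef]; push_cast; linarith [Nat.cast_nonneg (α := ℝ) N1]
    have h3 : 1 / ε < (n + 1 : ℝ) := by linarith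
    rw [div_lt_iff₀ hnpos]
    have h4 := (div_lt_iff₀ hεpos).1 h3
    linarith
  have hxA : x ∈ A n := by
    intro y hy
    calc |f y - f x| ≤ K * dist y x := hK y (hy.trans hNn2)
      _ ≤ (n + 1 : ℝ) * dist y x := mul_le_mul_of_nonneg_right hNn1 dist_nonneg
  obtain ⟨c, hcmem⟩ := Metric.dense_iff.1 hDdense x (1 / (4 * (n + 1 : ℝ))) (by positivity)
  obtain ⟨k, hk⟩ := by rw [hcseq] at hcmem; exact hcmem.2
  have hxS : x ∈ S n k := by
    refine ⟨hxA, Metric.mem_closedBall.2 ?_⟩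
    rw [hk, dist_comm]
    exact (Metric.mem_ball.1 hcmem.1).le
  exact stepanov_aux (C := (n + 1 : ℝ)) (δ := 1 / (n + 1 : ℝ)) hnpos.le (by positivity)
    (fun z hz y hy => hz.1 y hy) hxS (H1 n k hxS) (H2 n k hxS)
private lemma cexp_inner_continuous {m : ℕ} (t : EuclideanSpace ℝ (Fin m)) :
    Continuous fun x : EuclideanSpace ℝ (Fin m) =>
      Complex.exp (Complex.I * ((inner ℝ t x : ℝ) : ℂ)) :=
  Complex.continuous_exp.comp (continuous_const.mul
    (Complex.continuous_ofReal.comp (continuous_const.inner continuous_id)))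

private lemma abs_cexp_I_mul (r : ℝ) : ‖Complex.exp (Complex.I * (r : ℂ))‖ = 1 := by
  rw [mul_comm]
  exact Complex.norm_exp_ofReal_mul_I r

private lemma charFn_map {m : ℕ} {α : Type*} [MeasurableSpace α] (μ : Measure α)
    {h : α → EuclideanSpace ℝ (Fin m)} (hh : Measurable h) (t : EuclideanSpace ℝ (Fin m)) :
    charFn (μ.map h) t = ∫ a, Complex.exp (Complex.I * ((inner ℝ t (h a) : ℝ) : ℂ)) ∂μ := by
  rw [charFn, integral_map hh.aemeasurable (cexp_inner_continuous t).aestronglyMeasurable]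

private lemma abs_charFn_le {m : ℕ} (μ : Measure (EuclideanSpace ℝ (Fin m)))
    [IsProbabilityMeasure μ] (t : EuclideanSpace ℝ (Fin m)) :
    ‖charFn μ t‖ ≤ 1 := by
  rw [charFn]
  calc ‖∫ x, Complex.exp (Complex.I * ((inner ℝ t x : ℝ) : ℂ)) ∂μ‖
      ≤ ∫ x, ‖Complex.exp (Complex.I * ((inner ℝ t x : ℝ) : ℂ))‖ ∂μ :=
        norm_integral_le_integral_norm _
    _ = ∫ _x, (1 : ℝ) ∂μ := by
        congr 1
        funext x
        rw [abs_cexp_I_mul]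
    _ = 1 := by simp

private lemma cexp_I_lip (a b : ℝ) :
    ‖Complex.exp (Complex.I * (a : ℂ)) - Complex.exp (Complex.I * (b : ℂ))‖
      ≤ |a - b| := by
  have hdiff : ∀ t : ℝ, HasDerivAt (fun s : ℝ => Complex.exp (Complex.I * (s : ℂ)))
      (Complex.exp (Complex.I * (t : ℂ)) * Complex.I) t := by
    intro t
    have h1 : HasDerivAt (fun s : ℝ => (s : ℂ)) 1 t := by
      simpa using (hasDerivAt_id t).ofReal_comp
    have h2 := h1.const_mul Complex.I
    have h3 := h2.cexp
    simpa using h3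
  have hlip : LipschitzWith 1 (fun s : ℝ => Complex.exp (Complex.I * (s : ℂ))) := by
    apply lipschitzWith_of_nnnorm_deriv_le (fun t => (hdiff t).differentiableAt)
    intro t
    rw [(hdiff t).deriv]
    apply le_of_eq
    rw [← NNReal.coe_inj]
    push_cast
    rw [norm_mul, abs_cexp_I_mul,
      Complex.norm_I, one_mul]
  have := hlip.dist_le_mul a b
  simpa [Complex.dist_eq, Real.dist_eq] using this

private lemma charFn_map_stronglyMeasurable {m : ℕ} {α : Type*} [MeasurableSpace α]
    (μ : Measure α) [IsProbabilityMeasure μ] {h : α → EuclideanSpace ℝ (Fin m)}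
    (hh : Measurable h) :
    StronglyMeasurable fun t => charFn (μ.map h) t := by
  have heq : (fun t => charFn (μ.map h) t) =
      fun t => ∫ a, Complex.exp (Complex.I * ((inner ℝ t (h a) : ℝ) : ℂ)) ∂μ :=
    funext (charFn_map μ hh)
  rw [heq]
  apply MeasureTheory.StronglyMeasurable.integral_prod_right'
    (f := fun q : EuclideanSpace ℝ (Fin m) × α =>
      Complex.exp (Complex.I * ((inner ℝ q.1 (h q.2) : ℝ) : ℂ)))
  apply Measurable.stronglyMeasurable
  have hinner : Measurable fun q : EuclideanSpace ℝ (Fin m) × α => (inner ℝ q.1 (h q.2) : ℝ) := by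
    have hc : Continuous fun v : EuclideanSpace ℝ (Fin m) × EuclideanSpace ℝ (Fin m) =>
        (inner ℝ v.1 v.2 : ℝ) := continuous_inner
    exact hc.measurable.comp (measurable_fst.prodMk (hh.comp measurable_snd))
  exact Complex.continuous_exp.measurable.comp
    (measurable_const.mul (Complex.measurable_ofReal.comp hinner))

private lemma cfd2_nonneg {m : ℕ} (ω μ ν : Measure (EuclideanSpace ℝ (Fin m))) :
    0 ≤ CFD2 ω μ ν := by
  rw [CFD2]
  exact integral_nonneg fun t => by positivity

private lemma abs_charFn_sub_le {m : ℕ} (μ ν : Measure (EuclideanSpace ℝ (Fin m)))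
    [IsProbabilityMeasure μ] [IsProbabilityMeasure ν] (t : EuclideanSpace ℝ (Fin m)) :
    ‖charFn μ t - charFn ν t‖ ≤ 2 := by
  calc ‖charFn μ t - charFn ν t‖ ≤ ‖charFn μ t‖ + ‖charFn ν t‖ := norm_sub_le _ _
    _ ≤ 1 + 1 := by
        exact add_le_add (abs_charFn_le μ t) (abs_charFn_le ν t)
    _ = 2 := by norm_num

private lemma cfd2_le_four {m : ℕ} (ω μ ν : Measure (EuclideanSpace ℝ (Fin m)))
    [IsProbabilityMeasure ω] [IsProbabilityMeasure μ] [IsProbabilityMeasure ν] :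
    CFD2 ω μ ν ≤ 4 := by
  rw [CFD2]
  by_cases hI : Integrable (fun t => ‖charFn μ t - charFn ν t‖ ^ 2) ω
  · have hpt : ∀ t, ‖charFn μ t - charFn ν t‖ ^ 2 ≤ (4 : ℝ) := by
      intro t
      have h2 := abs_charFn_sub_le μ ν t
      have h0 : (0:ℝ) ≤ ‖charFn μ t - charFn ν t‖ := norm_nonneg _
      nlinarith
    have hle := integral_mono hI (integrable_const (4 : ℝ)) hpt
    simpa using hle
  · rw [integral_undef hI]
    norm_num
private lemma charFn_stronglyMeasurable {m : ℕ} (μ : Measure (EuclideanSpace ℝ (Fin m)))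
    [IsProbabilityMeasure μ] : StronglyMeasurable (charFn μ) := by
  have := charFn_map_stronglyMeasurable μ measurable_id
  rwa [Measure.map_id] at this

private lemma cfd2_diff_bound {m : ℕ} {α : Type*} [MeasurableSpace α]
    (P' : Measure (EuclideanSpace ℝ (Fin m))) [IsProbabilityMeasure P']
    (ζ : Measure α) [IsProbabilityMeasure ζ]
    (ω : Measure (EuclideanSpace ℝ (Fin m))) [IsProbabilityMeasure ω]
    {h h' : α → EuclideanSpace ℝ (Fin m)} (hh : Measurable h) (hh' : Measurable h')
    (hω1 : Integrable (fun t => ‖t‖) ω)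
    {Lb : α → ℝ} (hLbi : Integrable Lb ζ) (hLb0 : ∀ z, 0 ≤ Lb z)
    (hbound : ∀ z, ‖h' z - h z‖ ≤ Lb z) :
    |CFD2 ω P' (ζ.map h') - CFD2 ω P' (ζ.map h)| ≤
      4 * (∫ t, ‖t‖ ∂ω) * (∫ z, Lb z ∂ζ) := by
  haveI : IsProbabilityMeasure (ζ.map h) := Measure.isProbabilityMeasure_map hh.aemeasurable
  haveI : IsProbabilityMeasure (ζ.map h') := Measure.isProbabilityMeasure_map hh'.aemeasurable
  set CL := ∫ z, Lb z ∂ζ with hCLdef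
  have hCL0 : 0 ≤ CL := integral_nonneg hLb0
  -- characteristic function difference bound
  have hcf : ∀ t, ‖charFn (ζ.map h') t - charFn (ζ.map h) t‖ ≤ ‖t‖ * CL := by
    intro t
    rw [charFn_map ζ hh' t, charFn_map ζ hh t]
    have hint : ∀ (k : α → EuclideanSpace ℝ (Fin m)), Measurable k →
        Integrable (fun a => Complex.exp (Complex.I * ((inner ℝ t (k a) : ℝ) : ℂ))) ζ := by
      intro k hk
      refine Integrable.mono' (integrable_const (1:ℝ)) ?_ (ae_of_all _ fun a => ?_)
      · exact ((cexp_inner_continuous t).measurable.comp hk).aestronglyMeasurable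
      · rw [abs_cexp_I_mul]
    rw [← integral_sub (hint h' hh') (hint h hh)]
    have hptw : ∀ a, ‖Complex.exp (Complex.I * ((inner ℝ t (h' a) : ℝ) : ℂ)) -
        Complex.exp (Complex.I * ((inner ℝ t (h a) : ℝ) : ℂ))‖ ≤ ‖t‖ * Lb a := by
      intro a
      calc ‖Complex.exp (Complex.I * ((inner ℝ t (h' a) : ℝ) : ℂ)) -
              Complex.exp (Complex.I * ((inner ℝ t (h a) : ℝ) : ℂ))‖
          ≤ |(inner ℝ t (h' a) : ℝ) - (inner ℝ t (h a) : ℝ)| := cexp_I_lip _ _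
        _ = |(inner ℝ t (h' a - h a) : ℝ)| := by rw [← inner_sub_right]
        _ ≤ ‖t‖ * ‖h' a - h a‖ := abs_real_inner_le_norm t _
        _ ≤ ‖t‖ * Lb a := mul_le_mul_of_nonneg_left (hbound a) (norm_nonneg t)
    calc ‖∫ a, (Complex.exp (Complex.I * ((inner ℝ t (h' a) : ℝ) : ℂ)) -
            Complex.exp (Complex.I * ((inner ℝ t (h a) : ℝ) : ℂ))) ∂ζ‖
        ≤ ∫ a, ‖Complex.exp (Complex.I * ((inner ℝ t (h' a) : ℝ) : ℂ)) -
            Complex.exp (Complex.I * ((inner ℝ t (h a) : ℝ) : ℂ))‖ ∂ζ :=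
          norm_integral_le_integral_norm _
      _ ≤ ∫ a, ‖t‖ * Lb a ∂ζ := by
          refine integral_mono ((hint h' hh').sub (hint h hh)).norm
            (hLbi.const_mul ‖t‖) fun a => hptw a
      _ = ‖t‖ * CL := by rw [integral_const_mul]
  -- integrands over ω
  set G' : EuclideanSpace ℝ (Fin m) → ℝ :=
    fun t => ‖charFn P' t - charFn (ζ.map h') t‖ ^ 2 with hG'def
  set G : EuclideanSpace ℝ (Fin m) → ℝ :=
    fun t => ‖charFn P' t - charFn (ζ.map h) t‖ ^ 2 with hGdef
  have hsm : ∀ (ν : Measure (EuclideanSpace ℝ (Fin m))), IsProbabilityMeasure ν →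
      StronglyMeasurable (fun t => ‖charFn P' t - charFn ν t‖ ^ 2) := by
    intro ν hν
    have h1 : StronglyMeasurable (fun t => charFn P' t - charFn ν t) :=
      (charFn_stronglyMeasurable P').sub (charFn_stronglyMeasurable ν)
    exact (continuous_norm.pow 2).comp_stronglyMeasurable h1
  have hintG : ∀ (ν : Measure (EuclideanSpace ℝ (Fin m))) (hν : IsProbabilityMeasure ν),
      Integrable (fun t => ‖charFn P' t - charFn ν t‖ ^ 2) ω := by
    intro ν hν
    refine Integrable.mono' (integrable_const (4:ℝ))
      (hsm ν hν).aestronglyMeasurable (ae_of_all _ fun t => ?_)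
    have h2 := abs_charFn_sub_le P' ν t
    have h0 : (0:ℝ) ≤ ‖charFn P' t - charFn ν t‖ := norm_nonneg _
    rw [Real.norm_eq_abs, abs_of_nonneg (by positivity)]
    nlinarith
  have hG'i : Integrable G' ω := hintG _ ‹_›
  have hGi : Integrable G ω := hintG _ ‹_›
  -- pointwise difference bound
  have hptw2 : ∀ t, |G' t - G t| ≤ 4 * (‖t‖ * CL) := by
    intro t
    set a := ‖charFn P' t - charFn (ζ.map h') t‖ with hadef
    set b := ‖charFn P' t - charFn (ζ.map h) t‖ with hbdef
    have ha2 : a ≤ 2 := abs_charFn_sub_le _ _ t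
    have hb2 : b ≤ 2 := abs_charFn_sub_le _ _ t
    have ha0 : 0 ≤ a := norm_nonneg _
    have hb0 : 0 ≤ b := norm_nonneg _
    have hab : |a - b| ≤ ‖t‖ * CL := by
      calc |a - b| ≤ ‖(charFn P' t - charFn (ζ.map h') t) -
              (charFn P' t - charFn (ζ.map h) t)‖ :=
            abs_norm_sub_norm_le _ _
        _ = ‖charFn (ζ.map h') t - charFn (ζ.map h) t‖ := by
            rw [show (charFn P' t - charFn (ζ.map h') t) - (charFn P' t - charFn (ζ.map h) t)
              = -(charFn (ζ.map h') t - charFn (ζ.map h) t) by ring, norm_neg]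
        _ ≤ ‖t‖ * CL := hcf t
    have heq : |a ^ 2 - b ^ 2| = |a - b| * (a + b) := by
      rw [sq_sub_sq, abs_mul, abs_of_nonneg (by linarith : (0:ℝ) ≤ a + b), mul_comm]
    calc |G' t - G t| = |a ^ 2 - b ^ 2| := rfl
      _ = |a - b| * (a + b) := heq
      _ ≤ (‖t‖ * CL) * 4 := by
          refine mul_le_mul hab (by linarith) (by linarith) ?_
          positivity
      _ = 4 * (‖t‖ * CL) := by ring
  -- assemble
  have hrw : CFD2 ω P' (ζ.map h') - CFD2 ω P' (ζ.map h) = ∫ t, (G' t - G t) ∂ω := by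
    rw [CFD2, CFD2, integral_sub hG'i hGi]
  rw [hrw]
  calc |∫ t, (G' t - G t) ∂ω| ≤ ∫ t, |G' t - G t| ∂ω := by
        have hni := norm_integral_le_integral_norm (μ := ω) (fun t => G' t - G t)
        simpa [Real.norm_eq_abs] using hni
    _ ≤ ∫ t, 4 * (‖t‖ * CL) ∂ω := by
        refine integral_mono (hG'i.sub hGi).abs (((hω1.mul_const CL).const_mul 4)) fun t =>
          hptw2 t
    _ = 4 * (∫ t, ‖t‖ ∂ω) * CL := by
        rw [integral_const_mul, integral_mul_const]
        ring

/-- Theorem 1, differentiability a.e.: with Θ = ℝ^p, if the local Lipschitz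
assumption holds at every θ, then `D` is differentiable at Lebesgue-almost every θ. -/
theorem cfd_sup_differentiable_ae
    {p : ℕ}
    {Z : Type*} [MeasurableSpace Z] (ζ : Measure Z) [IsProbabilityMeasure ζ]
    {d m : ℕ} (P : Measure (EuclideanSpace ℝ (Fin d))) [IsProbabilityMeasure P]
    {Φ W : Type*} [Nonempty Φ] [Nonempty W]
    (f : Φ → EuclideanSpace ℝ (Fin d) → EuclideanSpace ℝ (Fin m))
    (hf : ∀ φ, Measurable (f φ))
    (g : EuclideanSpace ℝ (Fin p) → Z → EuclideanSpace ℝ (Fin d))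
    (hg : ∀ θ, Measurable (g θ))
    (ω : W → Measure (EuclideanSpace ℝ (Fin m)))
    (hω : ∀ η, IsProbabilityMeasure (ω η))
    (T : ℝ)
    (hTint : ∀ η, Integrable (fun t => ‖t‖) (ω η))
    (hT : ∀ η, (∫ t, ‖t‖ ∂(ω η)) ≤ T)
    (hLL : ∀ θ : EuclideanSpace ℝ (Fin p), ∃ U : Set (EuclideanSpace ℝ (Fin p)),
      IsOpen U ∧ θ ∈ U ∧ ∃ L : Z → ℝ,
      Measurable L ∧ (∀ z, 0 ≤ L z) ∧ Integrable L ζ ∧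
      ∀ θ' ∈ U, ∀ z : Z, ∀ φ : Φ,
        ‖f φ (g θ' z) - f φ (g θ z)‖ ≤ L z * ‖θ' - θ‖) :
    ∀ᵐ θ ∂(volume : Measure (EuclideanSpace ℝ (Fin p))),
      DifferentiableAt ℝ (fun θ : EuclideanSpace ℝ (Fin p) => ⨆ q : Φ × W,
        CFD2 (ω q.2) (P.map (f q.1)) (ζ.map (fun z => f q.1 (g θ z)))) θ := by
  apply stepanov
  intro θ
  obtain ⟨U, hUopen, hθU, L, hLmeas, hL0, hLint, hLip⟩ := hLL θ
  obtain ⟨ε, hεpos, hball⟩ := Metric.isOpen_iff.1 hUopen θ hθU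
  set CL := ∫ z, L z ∂ζ with hCLdef
  have hCL0 : 0 ≤ CL := integral_nonneg hL0
  refine ⟨4 * T * CL, ε, hεpos, ?_⟩
  intro θ' hθ'
  have hθ'U : θ' ∈ U := hball (Metric.mem_ball.2 hθ')
  set F : Φ × W → EuclideanSpace ℝ (Fin p) → ℝ := fun q ϑ =>
    CFD2 (ω q.2) (P.map (f q.1)) (ζ.map fun z => f q.1 (g ϑ z)) with hFdef
  have hPq : ∀ φ : Φ, IsProbabilityMeasure (P.map (f φ)) := fun φ =>
    Measure.isProbabilityMeasure_map (hf φ).aemeasurable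
  have hmeasq : ∀ (φ : Φ) (ϑ : EuclideanSpace ℝ (Fin p)),
      Measurable fun z => f φ (g ϑ z) := fun φ ϑ => (hf φ).comp (hg ϑ)
  have hζq : ∀ (φ : Φ) (ϑ : EuclideanSpace ℝ (Fin p)),
      IsProbabilityMeasure (ζ.map fun z => f φ (g ϑ z)) := fun φ ϑ =>
    Measure.isProbabilityMeasure_map (hmeasq φ ϑ).aemeasurable
  have hq : ∀ q : Φ × W, |F q θ' - F q θ| ≤ 4 * T * CL * dist θ' θ := by
    intro q
    haveI := hω q.2
    haveI := hPq q.1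
    have hb := cfd2_diff_bound (P.map (f q.1)) ζ (ω q.2) (hmeasq q.1 θ) (hmeasq q.1 θ')
      (hTint q.2) (Lb := fun z => L z * ‖θ' - θ‖) (hLint.mul_const _)
      (fun z => mul_nonneg (hL0 z) (norm_nonneg _))
      (fun z => hLip θ' hθ'U z q.1)
    rw [integral_mul_const] at hb
    calc |F q θ' - F q θ| ≤ 4 * (∫ t, ‖t‖ ∂(ω q.2)) * (CL * ‖θ' - θ‖) := hb
      _ ≤ 4 * T * (CL * ‖θ' - θ‖) := by
          refine mul_le_mul_of_nonneg_right ?_ (by positivity)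
          linarith [hT q.2]
      _ = 4 * T * CL * dist θ' θ := by rw [dist_eq_norm]; ring
  have hbdd : ∀ ϑ : EuclideanSpace ℝ (Fin p),
      BddAbove (Set.range fun q : Φ × W => F q ϑ) := by
    intro ϑ
    refine ⟨4, ?_⟩
    rintro v ⟨q, rfl⟩
    haveI := hω q.2
    haveI := hPq q.1
    haveI := hζq q.1 ϑ
    exact cfd2_le_four _ _ _
  have hsup : ∀ ϑ₁ ϑ₂ : EuclideanSpace ℝ (Fin p),
      (∀ q, |F q ϑ₁ - F q ϑ₂| ≤ 4 * T * CL * dist θ' θ) →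
      (⨆ q, F q ϑ₁) - (⨆ q, F q ϑ₂) ≤ 4 * T * CL * dist θ' θ := by
    intro ϑ₁ ϑ₂ hqq
    rw [sub_le_iff_le_add, add_comm]
    refine ciSup_le fun q => ?_
    have h1 : F q ϑ₁ ≤ F q ϑ₂ + 4 * T * CL * dist θ' θ := by
      have := (abs_le.1 (hqq q)).2
      linarith
    exact h1.trans (add_le_add (le_ciSup (hbdd ϑ₂) q) le_rfl)
  show |(⨆ q, F q θ') - (⨆ q, F q θ)| ≤ 4 * T * CL * dist θ' θ
  refine abs_sub_le_iff.2 ⟨hsup θ' θ hq, hsup θ θ' fun q => ?_⟩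
  rw [abs_sub_comm]
  exact hq q
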